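/- The explicit set of 29 points in ℝ² with integer coordinates (1,1260), (16,743), (22,531), (37,0), (306,592), (310,531), (366,552), (371,487), (374,525), (392,575), (396,613), (410,539), (416,550), (426,526), (434,552), (436,535), (446,565), (449,518), (450,498), (453,542), (458,526), (489,537), (492,502), (496,579), (516,467), (552,502), (754,697), (777,194), (1259,320) is in general position and contains no 6-hole. (Overmars's witness for h(6) ≥ 30.) -/

import Mathlib

/-- Orientation determinant of three points in the plane:
`det [[1,1,1],[pₓ,qₓ,rₓ],[p_y,q_y,r_y]]`.
The triple `(p,q,r)` is positively oriented iff `det3 p q r > 0`,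
and negatively oriented iff `det3 p q r < 0`. -/
noncomputable def det3 (p q r : ℝ × ℝ) : ℝ :=
  Matrix.det !![(1:ℝ), 1, 1; p.1, q.1, r.1; p.2, q.2, r.2]

/-- A set of points in the plane is in general position if no three
distinct points of it are collinear. -/
def InGenPos (S : Set (ℝ × ℝ)) : Prop :=
  ∀ p ∈ S, ∀ q ∈ S, ∀ r ∈ S, p ≠ q → p ≠ r → q ≠ r →
    ¬ Collinear ℝ ({p, q, r} : Set (ℝ × ℝ))

/-- `P` is a `k`-gon of `S`: a `k`-element subset of `S` in convex position,
i.e. every point of `P` is an extreme point of the convex hull of `P`. -/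
def IsGon (k : ℕ) (S P : Set (ℝ × ℝ)) : Prop :=
  P ⊆ S ∧ P.Finite ∧ P.ncard = k ∧
    ∀ p ∈ P, p ∈ Set.extremePoints ℝ (convexHull ℝ P)

/-- `P` is a `k`-hole of `S`: a `k`-gon of `S` whose convex hull contains
no point of `S` other than the `k` points of `P`. -/
def IsHole (k : ℕ) (S P : Set (ℝ × ℝ)) : Prop :=
  IsGon k S P ∧ ∀ q ∈ S, q ∈ convexHull ℝ P → q ∈ P

/-- Overmars's explicit set of 29 points. -/
def overmarsSet : Set (ℝ × ℝ) :=
  {(1, 1260), (16, 743), (22, 531), (37, 0), (306, 592), (310, 531),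
   (366, 552), (371, 487), (374, 525), (392, 575), (396, 613), (410, 539),
   (416, 550), (426, 526), (434, 552), (436, 535), (446, 565), (449, 518),
   (450, 498), (453, 542), (458, 526), (489, 537), (492, 502), (496, 579),
   (516, 467), (552, 502), (754, 697), (777, 194), (1259, 320)}

/-!
If `P` is a 6-hole of `S`, every triangle spanned by three points of `P` is empty: a further
point of `S` in it would lie in the convex hull of `P`, hence in `P`, and could then not be an
extreme point of that hull. For Overmars's set, whose coordinates are integers, emptiness of a
closed triangle is decided by the signs of three orientation determinants, and a pruned search
over 6-element subsets shows that no six points span only empty triangles. General position is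
the nonvanishing of all orientation determinants.
-/

theorem List.exists_sublist_image_eq {α β : Type*} (f : α → β) {L : List α} {P : Set β}
    (h : P ⊆ f '' {z | z ∈ L}) : ∃ l : List α, l.Sublist L ∧ f '' {z | z ∈ l} = P := by
  classical
  refine ⟨L.filter (fun z => f z ∈ P), List.filter_sublist, Set.ext fun x => ⟨?_, fun hx => ?_⟩⟩
  · rintro ⟨z, hz, rfl⟩
    simpa using (List.mem_filter.1 hz).2
  · obtain ⟨z, hz, rfl⟩ := h hx
    exact ⟨z, List.mem_filter.2 ⟨hz, by simpa using hx⟩, rfl⟩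

section TripleClique

variable {α : Type*} [DecidableEq α] (good : α → α → α → Prop) [∀ a b c, Decidable (good a b c)]

def IsTripleClique (s : List α) : Prop :=
  ∀ a ∈ s, ∀ b ∈ s, ∀ c ∈ s, a ≠ b → a ≠ c → b ≠ c → good a b c

/-- `tripleCliqueFree good k chosen rest = true` certifies that no `k` elements of `rest`
extend `chosen` to a triple clique. -/
def tripleCliqueFree : ℕ → List α → List α → Bool
  | 0, _, _ => false
  | _ + 1, _, [] => true
  | k + 1, chosen, x :: rest =>
      (!(chosen.all fun a => chosen.all fun b => a = b ∨ good a b x) ||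
        tripleCliqueFree k (x :: chosen) rest) &&
      tripleCliqueFree (k + 1) chosen rest

variable {good}

theorem not_isTripleClique_append_of_tripleCliqueFree {rest : List α} :
    ∀ {k : ℕ} {chosen l : List α}, tripleCliqueFree good k chosen rest = true →
      l.Sublist rest → l.length = k → (chosen ++ l).Nodup →
      ¬ IsTripleClique good (chosen ++ l) := by
  induction rest with
  | nil =>
    rintro k chosen l hfree hl rfl - -
    rw [List.sublist_nil.1 hl] at hfree
    simp [tripleCliqueFree] at hfree
  | cons x rest ih =>
    rintro (_ | k) chosen l hfree hl hlen hnodup hclique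
    · simp [tripleCliqueFree] at hfree
    rw [tripleCliqueFree, Bool.and_eq_true] at hfree
    rcases List.sublist_cons_iff.1 hl with hl | ⟨l', rfl, hl'⟩
    · exact ih hfree.2 hl hlen hnodup hclique
    have hperm : (chosen ++ x :: l').Perm ((x :: chosen) ++ l') := List.perm_middle
    have hx : x ∉ chosen := fun hx =>
      (List.nodup_append.1 hnodup).2.2 x hx x List.mem_cons_self rfl
    have hext : (chosen.all fun a => chosen.all fun b => a = b ∨ good a b x) = true := by
      simp only [List.all_eq_true, decide_eq_true_eq]
      intro a ha b hb
      by_cases hab : a = b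
      · exact Or.inl hab
      · exact Or.inr (hclique a (by simp [ha]) b (by simp [hb]) x (by simp) hab
          (by rintro rfl; exact hx ha) (by rintro rfl; exact hx hb))
    rw [hext, Bool.not_true, Bool.false_or] at hfree
    exact ih hfree.1 hl' (by simpa using hlen) (hperm.nodup_iff.1 hnodup)
      (fun a ha b hb c hc => hclique a (hperm.mem_iff.2 ha) b (hperm.mem_iff.2 hb) c
        (hperm.mem_iff.2 hc))

theorem not_isTripleClique_of_tripleCliqueFree {k : ℕ} {rest l : List α}
    (hfree : tripleCliqueFree good k [] rest = true) (hl : l.Sublist rest)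
    (hnodup : l.Nodup) (hlen : l.length = k) : ¬ IsTripleClique good l :=
  not_isTripleClique_append_of_tripleCliqueFree hfree hl hlen hnodup

end TripleClique

theorem det3_eq (p q r : ℝ × ℝ) :
    det3 p q r = (q.1 - p.1) * (r.2 - p.2) - (q.2 - p.2) * (r.1 - p.1) := by
  simp only [det3, Matrix.det_fin_three, Matrix.of_apply, Matrix.cons_val', Matrix.cons_val_zero,
    Matrix.cons_val_fin_one, Matrix.cons_val_one, Matrix.cons_val, one_mul]
  ring

theorem det3_swap (p q r : ℝ × ℝ) : det3 q p r = -det3 p q r := by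
  rw [det3_eq, det3_eq]; ring

theorem det3_eq_zero_of_collinear {p q r : ℝ × ℝ}
    (h : Collinear ℝ ({p, q, r} : Set (ℝ × ℝ))) : det3 p q r = 0 := by
  obtain ⟨v, hv⟩ := (collinear_iff_of_mem (Set.mem_insert p {q, r})).1 h
  obtain ⟨s, rfl⟩ := hv q (by simp)
  obtain ⟨t, rfl⟩ := hv r (by simp)
  simp only [det3_eq, vadd_eq_add, Prod.fst_add, Prod.snd_add, Prod.smul_fst, Prod.smul_snd,
    smul_eq_mul]
  ring

theorem smul_add_smul_add_smul_mem_convexHull {𝕜 E : Type*} [Field 𝕜] [LinearOrder 𝕜]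
    [IsStrictOrderedRing 𝕜] [AddCommGroup E] [Module 𝕜 E] (p q r : E) {a b c : 𝕜}
    (ha : 0 ≤ a) (hb : 0 ≤ b) (hc : 0 ≤ c) (habc : a + b + c = 1) :
    a • p + b • q + c • r ∈ convexHull 𝕜 {p, q, r} := by
  have h := (convex_convexHull 𝕜 ({p, q, r} : Set E)).sum_mem (t := Finset.univ)
    (w := ![a, b, c]) (z := ![p, q, r]) (fun i _ => by fin_cases i <;> assumption)
    (by simpa [Fin.sum_univ_three] using habc)
    (fun i _ => subset_convexHull 𝕜 _ (by fin_cases i <;> simp))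
  simpa [Fin.sum_univ_three, add_assoc] using h

/-- Barycentric coordinates: the three oriented areas `det3 q r x`, `det3 r p x`, `det3 p q x`
sum to `det3 p q r` and weight `p`, `q`, `r` to `x`. -/
theorem mem_convexHull_of_det3_nonneg {p q r x : ℝ × ℝ} (h : det3 p q r ≠ 0)
    (hp : 0 ≤ det3 q r x) (hq : 0 ≤ det3 r p x) (hr : 0 ≤ det3 p q x) :
    x ∈ convexHull ℝ {p, q, r} := by
  have hsum : det3 q r x + det3 r p x + det3 p q x = det3 p q r := by
    simp only [det3_eq]; ring
  have hpos : 0 < det3 p q r := lt_of_le_of_ne (hsum ▸ by positivity) h.symm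
  convert smul_add_smul_add_smul_mem_convexHull p q r (div_nonneg hp hpos.le)
    (div_nonneg hq hpos.le) (div_nonneg hr hpos.le) (by field_simp; linarith) using 1
  ext <;> simp only [Prod.fst_add, Prod.snd_add, Prod.smul_fst, Prod.smul_snd, smul_eq_mul] <;>
    field_simp <;> simp only [det3_eq] <;> ring

theorem IsHole.mem_of_mem_convexHull {k : ℕ} {S P T : Set (ℝ × ℝ)} {z : ℝ × ℝ}
    (hP : IsHole k S P) (hTP : T ⊆ P) (hz : z ∈ S) (hzT : z ∈ convexHull ℝ T) : z ∈ T := by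
  have hzP : z ∈ P := hP.2 z hz (convexHull_mono hTP hzT)
  have hext := (convex_convexHull ℝ P).mem_extremePoints_iff_mem_sdiff_convexHull_sdiff.1
    (hP.1.2.2.2 z hzP)
  by_contra hzT'
  have hT : T ⊆ P \ {z} := fun t ht => ⟨hTP ht, fun htz => hzT' (htz ▸ ht)⟩
  exact hext.2 (convexHull_mono (Set.sdiff_subset_sdiff_left (subset_convexHull ℝ P))
    (convexHull_mono hT hzT))

namespace Overmars

def points : List (ℤ × ℤ) :=
  [(1, 1260), (16, 743), (22, 531), (37, 0), (306, 592), (310, 531),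
   (366, 552), (371, 487), (374, 525), (392, 575), (396, 613), (410, 539),
   (416, 550), (426, 526), (434, 552), (436, 535), (446, 565), (449, 518),
   (450, 498), (453, 542), (458, 526), (489, 537), (492, 502), (496, 579),
   (516, 467), (552, 502), (754, 697), (777, 194), (1259, 320)]

def castPoint : ℤ × ℤ → ℝ × ℝ := Prod.map (↑) (↑)

theorem castPoint_injective : Function.Injective castPoint :=
  Prod.map_injective.2 ⟨Int.cast_injective, Int.cast_injective⟩

theorem ncard_image_castPoint {l : List (ℤ × ℤ)} (hl : l.Nodup) :
    (castPoint '' {z | z ∈ l}).ncard = l.length := by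
  rw [Set.ncard_image_of_injective _ castPoint_injective, ← List.coe_toFinset,
    Set.ncard_coe_finset, List.toFinset_card_of_nodup hl]

theorem overmarsSet_eq : overmarsSet = castPoint '' {z | z ∈ points} := by
  ext x
  simp only [overmarsSet, points, List.mem_cons, List.not_mem_nil, or_false, Set.mem_image,
    Set.mem_insert_iff, Set.mem_singleton_iff, Set.mem_ofPred_eq, or_and_right, exists_or,
    exists_eq_left, castPoint, Prod.map_apply, Int.cast_ofNat, Int.cast_one, Int.cast_zero]
  simp only [eq_comm]

def det3Int (a b c : ℤ × ℤ) : ℤ :=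
  (b.1 - a.1) * (c.2 - a.2) - (b.2 - a.2) * (c.1 - a.1)

theorem det3_castPoint (a b c : ℤ × ℤ) :
    det3 (castPoint a) (castPoint b) (castPoint c) = det3Int a b c := by
  simp only [det3_eq, det3Int, castPoint, Prod.map_fst, Prod.map_snd]
  push_cast
  ring

def InTriangle (a b c q : ℤ × ℤ) : Prop :=
  (0 ≤ det3Int a b q ∧ 0 ≤ det3Int b c q ∧ 0 ≤ det3Int c a q) ∨
    (det3Int a b q ≤ 0 ∧ det3Int b c q ≤ 0 ∧ det3Int c a q ≤ 0)

instance (a b c q : ℤ × ℤ) : Decidable (InTriangle a b c q) := by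
  unfold InTriangle; infer_instance

def IsEmptyTriangle (a b c : ℤ × ℤ) : Prop :=
  ∀ q ∈ points, InTriangle a b c q → q = a ∨ q = b ∨ q = c

instance (a b c : ℤ × ℤ) : Decidable (IsEmptyTriangle a b c) := by
  unfold IsEmptyTriangle; infer_instance

theorem castPoint_mem_convexHull_of_inTriangle {a b c q : ℤ × ℤ} (h : det3Int a b c ≠ 0)
    (hq : InTriangle a b c q) :
    castPoint q ∈ convexHull ℝ {castPoint a, castPoint b, castPoint c} := by
  have h' : det3 (castPoint a) (castPoint b) (castPoint c) ≠ 0 := by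
    rw [det3_castPoint]; exact_mod_cast h
  have cast_nonneg {x y z : ℤ × ℤ} (h : 0 ≤ det3Int x y z) :
      0 ≤ det3 (castPoint x) (castPoint y) (castPoint z) := by
    rw [det3_castPoint]; exact_mod_cast h
  rcases hq with ⟨hab, hbc, hca⟩ | ⟨hab, hbc, hca⟩
  · exact mem_convexHull_of_det3_nonneg h' (cast_nonneg hbc) (cast_nonneg hca) (cast_nonneg hab)
  · have cast_nonneg_swap {x y z : ℤ × ℤ} (h : det3Int x y z ≤ 0) :
        0 ≤ det3 (castPoint y) (castPoint x) (castPoint z) := by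
      rw [det3_swap, det3_castPoint, neg_nonneg]; exact_mod_cast h
    rw [Set.insert_comm]
    exact mem_convexHull_of_det3_nonneg (by rwa [det3_swap, neg_ne_zero])
      (cast_nonneg_swap hca) (cast_nonneg_swap hbc) (cast_nonneg_swap hab)

theorem points_nodup : points.Nodup := by decide

theorem det3Int_ne_zero : ∀ a ∈ points, ∀ b ∈ points, ∀ c ∈ points,
    a ≠ b → a ≠ c → b ≠ c → det3Int a b c ≠ 0 := by
  decide +kernel

theorem tripleCliqueFree_points : tripleCliqueFree IsEmptyTriangle 6 [] points = true := by
  decide +kernel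

theorem mem_overmarsSet {x : ℝ × ℝ} : x ∈ overmarsSet ↔ ∃ z ∈ points, castPoint z = x := by
  rw [overmarsSet_eq]; rfl

theorem inGenPos_overmarsSet : InGenPos overmarsSet := by
  rintro _ hp _ hq _ hr hpq hpr hqr hcol
  obtain ⟨a, ha, rfl⟩ := mem_overmarsSet.1 hp
  obtain ⟨b, hb, rfl⟩ := mem_overmarsSet.1 hq
  obtain ⟨c, hc, rfl⟩ := mem_overmarsSet.1 hr
  have := det3_eq_zero_of_collinear hcol
  rw [det3_castPoint, Int.cast_eq_zero] at this
  exact det3Int_ne_zero a ha b hb c hc (ne_of_apply_ne _ hpq) (ne_of_apply_ne _ hpr)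
    (ne_of_apply_ne _ hqr) this

theorem isTripleClique_of_isHole {k : ℕ} {l : List (ℤ × ℤ)} (hl : l.Sublist points)
    (hP : IsHole k overmarsSet (castPoint '' {z | z ∈ l})) :
    IsTripleClique IsEmptyTriangle l := by
  intro a ha b hb c hc hab hac hbc q hq hqabc
  have hmem := hP.mem_of_mem_convexHull
    (by rintro _ (rfl | rfl | rfl) <;> exact ⟨_, ‹_›, rfl⟩)
    (mem_overmarsSet.2 ⟨q, hq, rfl⟩)
    (castPoint_mem_convexHull_of_inTriangle
      (det3Int_ne_zero a (hl.subset ha) b (hl.subset hb) c (hl.subset hc) hab hac hbc) hqabc)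
  simpa only [Set.mem_insert_iff, Set.mem_singleton_iff, castPoint_injective.eq_iff] using hmem

end Overmars

open Overmars in
/-- Overmars's 29-point set is a set of 29 points in general position
containing no 6-hole (witness for `h(6) ≥ 30`). -/
theorem overmarsSet_genpos_no_6hole :
    overmarsSet.ncard = 29 ∧ InGenPos overmarsSet ∧
      ¬ ∃ P : Set (ℝ × ℝ), IsHole 6 overmarsSet P := by
  refine ⟨by rw [overmarsSet_eq, ncard_image_castPoint points_nodup]; rfl,
    inGenPos_overmarsSet, ?_⟩
  rintro ⟨P, hP⟩
  obtain ⟨l, hl, rfl⟩ := List.exists_sublist_image_eq castPoint (overmarsSet_eq ▸ hP.1.1)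
  have hnodup := hl.nodup points_nodup
  refine not_isTripleClique_of_tripleCliqueFree tripleCliqueFree_points hl hnodup ?_
    (isTripleClique_of_isHole hl hP)
  rw [← ncard_image_castPoint hnodup, hP.1.2.2.1]
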